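/- The scalar curvature of (ℝ⁴, g̃), defined by τ = Σᵢⱼ g̃(R̃(eᵢ,eⱼ)eⱼ,eᵢ) (sum over i, j = 1,…,4 in the orthonormal frame {e₁,e₂,e₃,e₄}), equals −1 at every point. -/

import Mathlib

/-!
The frame `e₁, …, e₄` is orthonormal and its brackets have constant coefficients
(`[e₄, e₂] = e₁`, `[e₄, e₃] = e₂`, all others zero): it is a left-invariant orthonormal frame
on a nilpotent Lie group. By the Koszul formula the connection coefficients
`∇_{e_a} e_b = ∑ c, Γ_ab^c e_c` are then constants, so the frame components of
`R̃(e_a, e_b) e_b` are quadratic expressions in the `Γ`'s and the structure constants, and the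
scalar curvature is a finite sum of rationals, which equals `-1`.
-/

noncomputable section

/-- The left-invariant frame fields e₁,e₂,e₃,e₄ on ℝ⁴ (coordinates x,y,z,t = p 0,...,p 3). -/
def eVF (i : Fin 4) (p : Fin 4 → ℝ) : Fin 4 → ℝ :=
  ![![1, 0, 0, 0],
    ![p 3, 1, 0, 0],
    ![(p 3) ^ 2 / 2, p 3, 1, 0],
    ![0, 0, 0, 1]] i

/-- The matrix of the metric g̃ at a point with last coordinate t. -/
def gMat (t : ℝ) : Matrix (Fin 4) (Fin 4) ℝ :=
  !![1, -t, t ^ 2 / 2, 0;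
     -t, 1 + t ^ 2, -t * (1 + t ^ 2 / 2), 0;
     t ^ 2 / 2, -t * (1 + t ^ 2 / 2), 1 + t ^ 2 + t ^ 4 / 4, 0;
     0, 0, 0, 1]

/-- The metric g̃ as a bilinear form on each tangent space. -/
def gMet (p X Y : Fin 4 → ℝ) : ℝ :=
  ∑ i, ∑ j, gMat (p 3) i j * X i * Y j

/-- Partial derivative in direction of the i-th coordinate. -/
def pd (i : Fin 4) (f : (Fin 4 → ℝ) → ℝ) (p : Fin 4 → ℝ) : ℝ :=
  deriv (fun s => f (Function.update p i s)) (p i)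

/-- The Christoffel symbols Γᵏᵢⱼ of g̃. -/
def Chr (p : Fin 4 → ℝ) (k i j : Fin 4) : ℝ :=
  (1 / 2) * ∑ l, (gMat (p 3))⁻¹ k l *
    (pd i (fun q => gMat (q 3) j l) p + pd j (fun q => gMat (q 3) i l) p
      - pd l (fun q => gMat (q 3) i j) p)

/-- The Levi-Civita connection of g̃ in coordinates. -/
def nabla (X Y : (Fin 4 → ℝ) → (Fin 4 → ℝ)) (p : Fin 4 → ℝ) : Fin 4 → ℝ :=
  fun k => (∑ i, X p i * pd i (fun q => Y q k) p)
    + ∑ i, ∑ j, Chr p k i j * X p i * Y p j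

/-- Lie bracket of vector fields on ℝ⁴. -/
def bracket (X Y : (Fin 4 → ℝ) → (Fin 4 → ℝ)) (p : Fin 4 → ℝ) : Fin 4 → ℝ :=
  fderiv ℝ Y p (X p) - fderiv ℝ X p (Y p)

/-- The curvature tensor R̃(X,Y)Z = ∇̃_X ∇̃_Y Z − ∇̃_Y ∇̃_X Z − ∇̃_{[X,Y]} Z. -/
def Riem (X Y Z : (Fin 4 → ℝ) → (Fin 4 → ℝ)) (p : Fin 4 → ℝ) : Fin 4 → ℝ :=
  nabla X (nabla Y Z) p - nabla Y (nabla X Z) p - nabla (bracket X Y) Z p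

open scoped Matrix

lemma pd_comp_coord (F : ℝ → ℝ) (i m : Fin 4) (p : Fin 4 → ℝ) :
    pd i (fun q => F (q m)) p = if i = m then deriv F (p m) else 0 := by
  unfold pd
  split_ifs with h
  · subst h
    simp only [Function.update_self]
  · simp [Function.update_of_ne (Ne.symm h)]

lemma fderiv_comp_coord_apply {ι E : Type*} [Fintype ι] [NormedAddCommGroup E]
    [NormedSpace ℝ E] {F : ℝ → E} {F' : E} {m : ι} {p : ι → ℝ} (hF : HasDerivAt F F' (p m))
    (v : ι → ℝ) : fderiv ℝ (fun q => F (q m)) p v = v m • F' := by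
  have hm : HasFDerivAt (fun q : ι → ℝ => q m) (ContinuousLinearMap.proj (R := ℝ) m) p :=
    hasFDerivAt_apply m p
  have hcomp := hF.hasFDerivAt.comp p hm
  rw [Function.comp_def] at hcomp
  rw [hcomp.fderiv]
  simp

lemma bracket_comp_coord {F G : ℝ → Fin 4 → ℝ} {F' G' : Fin 4 → ℝ} {m : Fin 4} {p : Fin 4 → ℝ}
    (hF : HasDerivAt F F' (p m)) (hG : HasDerivAt G G' (p m)) :
    bracket (fun q => F (q m)) (fun q => G (q m)) p = F (p m) m • G' - G (p m) m • F' := by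
  rw [bracket, fderiv_comp_coord_apply hF, fderiv_comp_coord_apply hG]

lemma pd_sum_const_mul {f : Fin 4 → (Fin 4 → ℝ) → ℝ} {p : Fin 4 → ℝ}
    (hf : ∀ c, DifferentiableAt ℝ (f c) p) (w : Fin 4 → ℝ) (i : Fin 4) :
    pd i (fun q => ∑ c, w c * f c q) p = ∑ c, w c * pd i (f c) p := by
  have hupd (c : Fin 4) : DifferentiableAt ℝ (fun s => f c (Function.update p i s)) (p i) := by
    refine DifferentiableAt.comp (f := Function.update p i) (p i) ?_
      (hasDerivAt_update p i (p i)).differentiableAt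
    simpa using hf c
  unfold pd
  rw [deriv_fun_sum fun c _ => (hupd c).const_mul (w c)]
  simp only [deriv_const_mul_field']

lemma nabla_sum_smul_left (X : Fin 4 → (Fin 4 → ℝ) → Fin 4 → ℝ) (w : Fin 4 → ℝ)
    (Y : (Fin 4 → ℝ) → Fin 4 → ℝ) (p : Fin 4 → ℝ) :
    nabla (fun q => ∑ c, w c • X c q) Y p = ∑ c, w c • nabla (X c) Y p := by
  ext k
  simp only [nabla, Finset.sum_apply, Pi.smul_apply, smul_eq_mul, Fin.sum_univ_four]
  ring

lemma nabla_sum_smul_right (X : (Fin 4 → ℝ) → Fin 4 → ℝ) (w : Fin 4 → ℝ)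
    {Y : Fin 4 → (Fin 4 → ℝ) → Fin 4 → ℝ} {p : Fin 4 → ℝ}
    (hY : ∀ c k, DifferentiableAt ℝ (fun q => Y c q k) p) :
    nabla X (fun q => ∑ c, w c • Y c q) p = ∑ c, w c • nabla X (Y c) p := by
  ext k
  simp only [nabla, Finset.sum_apply, Pi.smul_apply, smul_eq_mul,
    pd_sum_const_mul fun c => hY c k]
  simp only [Fin.sum_univ_four]
  ring

def frameCurv (Γ C : Fin 4 → Fin 4 → Fin 4 → ℝ) (a b d f : Fin 4) : ℝ :=
  ∑ c, (Γ b d c * Γ a c f - Γ a d c * Γ b c f - C a b c * Γ c d f)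

lemma Riem_frame {e : Fin 4 → (Fin 4 → ℝ) → Fin 4 → ℝ} {Γ C : Fin 4 → Fin 4 → Fin 4 → ℝ}
    {p : Fin 4 → ℝ} (hΓ : ∀ a b, nabla (e a) (e b) = fun q => ∑ c, Γ a b c • e c q)
    (hC : ∀ a b, bracket (e a) (e b) = fun q => ∑ c, C a b c • e c q)
    (he : ∀ c k, DifferentiableAt ℝ (fun q => e c q k) p) (a b d : Fin 4) :
    Riem (e a) (e b) (e d) p = ∑ f, frameCurv Γ C a b d f • e f p := by
  rw [Riem, hΓ b d, hΓ a d, hC a b, nabla_sum_smul_right _ _ he, nabla_sum_smul_right _ _ he,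
    nabla_sum_smul_left]
  simp only [hΓ]
  ext k
  simp only [Finset.sum_apply, Pi.smul_apply, Pi.sub_apply, Pi.add_apply, smul_eq_mul, frameCurv,
    Fin.sum_univ_four]
  ring

lemma gMet_sum_smul_left (p : Fin 4 → ℝ) (r : Fin 4 → ℝ) (v : Fin 4 → Fin 4 → ℝ)
    (Y : Fin 4 → ℝ) : gMet p (∑ f, r f • v f) Y = ∑ f, r f * gMet p (v f) Y := by
  simp only [gMet, Finset.sum_apply, Pi.smul_apply, smul_eq_mul, Fin.sum_univ_four]
  ring

lemma sum_gMet_Riem_frame {e : Fin 4 → (Fin 4 → ℝ) → Fin 4 → ℝ}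
    {Γ C : Fin 4 → Fin 4 → Fin 4 → ℝ} {p : Fin 4 → ℝ}
    (hΓ : ∀ a b, nabla (e a) (e b) = fun q => ∑ c, Γ a b c • e c q)
    (hC : ∀ a b, bracket (e a) (e b) = fun q => ∑ c, C a b c • e c q)
    (he : ∀ c k, DifferentiableAt ℝ (fun q => e c q k) p)
    (horth : ∀ i j, gMet p (e i p) (e j p) = if i = j then 1 else 0) :
    ∑ i, ∑ j, gMet p (Riem (e i) (e j) (e j) p) (e i p) = ∑ i, ∑ j, frameCurv Γ C i j j i := by
  simp only [Riem_frame hΓ hC he, gMet_sum_smul_left, horth, mul_ite, mul_one, mul_zero,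
    Finset.sum_ite_eq', Finset.mem_univ, if_true]

def frameMat (t : ℝ) : Matrix (Fin 4) (Fin 4) ℝ :=
  !![1, 0, 0, 0;
     t, 1, 0, 0;
     t ^ 2 / 2, t, 1, 0;
     0, 0, 0, 1]

def frameDeriv : Matrix (Fin 4) (Fin 4) ℝ :=
  !![0, 0, 0, 0;
     1, 0, 0, 0;
     0, 1, 0, 0;
     0, 0, 0, 0]

lemma eVF_eq_frameMat (i : Fin 4) : eVF i = fun p => frameMat (p 3) i := by
  funext p
  fin_cases i <;> rfl

lemma frameMat_apply_three (t : ℝ) (a : Fin 4) : frameMat t a 3 = if a = 3 then 1 else 0 := by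
  fin_cases a <;> simp [frameMat]

lemma hasDerivAt_frameMat (b : Fin 4) (t : ℝ) :
    HasDerivAt (fun s => frameMat s b) (∑ c, frameDeriv b c • frameMat t c) t := by
  have hsq : HasDerivAt (fun s : ℝ => s ^ 2 / 2) t t := by
    simpa using (hasDerivAt_pow 2 t).div_const 2
  rw [hasDerivAt_pi]
  intro k
  fin_cases b <;> fin_cases k <;>
    simp [frameMat, frameDeriv, Fin.sum_univ_four, hasDerivAt_const, hasDerivAt_id', hsq]

lemma differentiableAt_eVF (c k : Fin 4) (p : Fin 4 → ℝ) :
    DifferentiableAt ℝ (fun q => eVF c q k) p := by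
  have h := (hasDerivAt_frameMat c (p 3)).differentiableAt.comp p
    (differentiableAt_apply (𝕜 := ℝ) 3 p)
  rw [eVF_eq_frameMat]
  exact differentiableAt_pi.1 h k

-- Only `e₄` has a `t`-component, so `[e_a, e_b] = δ_{a4} ∂ₜ e_b - δ_{b4} ∂ₜ e_a`.
def structConst (a b c : Fin 4) : ℝ :=
  (if a = 3 then frameDeriv b c else 0) - (if b = 3 then frameDeriv a c else 0)

lemma bracket_eVF (a b : Fin 4) :
    bracket (eVF a) (eVF b) = fun q => ∑ c, structConst a b c • eVF c q := by
  funext p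
  simp only [eVF_eq_frameMat]
  rw [bracket_comp_coord (hasDerivAt_frameMat a _) (hasDerivAt_frameMat b _)]
  simp only [frameMat_apply_three, structConst, sub_smul, Finset.sum_sub_distrib]
  split_ifs <;> simp

lemma frameMat_mul_gMat_mul_transpose (t : ℝ) : frameMat t * gMat t * (frameMat t)ᵀ = 1 := by
  ext i j
  fin_cases i <;> fin_cases j <;>
    simp [frameMat, gMat, Matrix.mul_apply, Fin.sum_univ_four] <;> ring

lemma gMet_eVF (p : Fin 4 → ℝ) (i j : Fin 4) :
    gMet p (eVF i p) (eVF j p) = if i = j then 1 else 0 := by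
  rw [← Matrix.one_apply, ← frameMat_mul_gMat_mul_transpose (p 3)]
  simp only [gMet, eVF_eq_frameMat, Matrix.mul_apply, Matrix.transpose_apply, Finset.sum_mul]
  rw [Finset.sum_comm]
  simp only [mul_comm, mul_left_comm]

lemma Matrix.inv_eq_transpose_mul_of_mul_mul_transpose_eq_one {n : Type*} [Fintype n]
    [DecidableEq n] {K : Type*} [CommRing K] {E G : Matrix n n K} (h : E * G * Eᵀ = 1) :
    G⁻¹ = Eᵀ * E := by
  rw [Matrix.mul_assoc, mul_eq_one_comm, Matrix.mul_assoc] at h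
  exact Matrix.inv_eq_right_inv h

lemma gMat_inv (t : ℝ) : (gMat t)⁻¹ = (frameMat t)ᵀ * frameMat t :=
  Matrix.inv_eq_transpose_mul_of_mul_mul_transpose_eq_one (frameMat_mul_gMat_mul_transpose t)

def gMatDeriv (t : ℝ) : Matrix (Fin 4) (Fin 4) ℝ :=
  !![0, -1, t, 0;
     -1, 2 * t, -(1 + 3 / 2 * t ^ 2), 0;
     t, -(1 + 3 / 2 * t ^ 2), 2 * t + t ^ 3, 0;
     0, 0, 0, 0]

lemma hasDerivAt_gMat (i j : Fin 4) (t : ℝ) :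
    HasDerivAt (fun s => gMat s i j) (gMatDeriv t i j) t := by
  fin_cases i <;> fin_cases j <;> simp [gMat, gMatDeriv] <;>
    refine HasDerivAt.congr_deriv (DifferentiableAt.hasDerivAt (by fun_prop)) ?_ <;>
    simp (disch := fun_prop) <;> ring

lemma pd_gMat (i j l : Fin 4) (p : Fin 4 → ℝ) :
    pd i (fun q => gMat (q 3) j l) p = if i = 3 then gMatDeriv (p 3) j l else 0 := by
  rw [pd_comp_coord (fun s => gMat s j l), (hasDerivAt_gMat j l _).deriv]

lemma Chr_eq (p : Fin 4 → ℝ) (k i j : Fin 4) :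
    Chr p k i j = 1 / 2 * ∑ l, ((frameMat (p 3))ᵀ * frameMat (p 3)) k l *
      ((if i = 3 then gMatDeriv (p 3) j l else 0) + (if j = 3 then gMatDeriv (p 3) i l else 0)
        - if l = 3 then gMatDeriv (p 3) i j else 0) := by
  simp only [Chr, gMat_inv, pd_gMat]

-- Koszul formula for an orthonormal frame whose brackets have constant coefficients.
def connCoeff (a b c : Fin 4) : ℝ :=
  (structConst a b c - structConst b c a + structConst c a b) / 2

set_option maxHeartbeats 1000000 in
lemma nabla_eVF (a b : Fin 4) :
    nabla (eVF a) (eVF b) = fun q => ∑ c, connCoeff a b c • eVF c q := by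
  funext p k
  have hpd (i : Fin 4) : pd i (fun q => frameMat (q 3) b k) p =
      if i = 3 then ∑ c, frameDeriv b c * frameMat (p 3) c k else 0 := by
    simp only [pd_comp_coord (fun s => frameMat s b k),
      (hasDerivAt_pi.1 (hasDerivAt_frameMat b (p 3)) k).deriv, Finset.sum_apply, Pi.smul_apply,
      smul_eq_mul]
  simp only [nabla, hpd, Chr_eq, eVF_eq_frameMat, Finset.sum_apply, Pi.smul_apply, smul_eq_mul,
    mul_ite, mul_zero, Finset.sum_ite_eq', Finset.mem_univ, if_true, frameMat_apply_three]
  fin_cases a <;> fin_cases b <;> fin_cases k <;>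
    simp [Fin.sum_univ_four, frameMat, frameDeriv, gMatDeriv, connCoeff, structConst,
      Matrix.mul_apply] <;>
    ring

lemma sum_frameCurv_connCoeff : ∑ i, ∑ j, frameCurv connCoeff structConst i j j i = -1 := by
  simp [Fin.sum_univ_four, frameCurv, connCoeff, structConst, frameDeriv]
  norm_num

/-- The scalar curvature of (ℝ⁴, g̃) equals −1 at every point. -/
theorem nil4_scalar_curvature :
    ∀ p : Fin 4 → ℝ,
      (∑ i, ∑ j, gMet p (Riem (eVF i) (eVF j) (eVF j) p) (eVF i p)) = -1 := by
  intro p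
  rw [sum_gMet_Riem_frame nabla_eVF bracket_eVF (fun c k => differentiableAt_eVF c k p)
    (gMet_eVF p)]
  exact sum_frameCurv_connCoeff
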